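/- arXiv:2402.01346 — 6 statements merged into one kernel-verified Lean document; each statement's English description precedes it below -/
import Mathlib

section
/- Let Δ ≥ δ ≥ 1 be integers and let f : ℝ → ℝ → ℝ be a symmetric function (f(x,y) = f(y,x) for all x,y). Define the degree-based index F(G) = ∑_{uv ∈ E(G)} f(d(u), d(v)), where d denotes vertex degree. Suppose a, b ∈ {δ, δ+1, …, Δ} with a ≤ b are chosen to minimise the quantity a·b·f(a,b)/(a+b) over all such pairs. Then every finite simple graph G with minimum degree at least δ and maximum degree at most Δ satisfies F(G) ≥ (a·b·f(a,b)/(a+b))·|G|, where |G| is the number of vertices of G. -/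
/-!
Write `f(x, y) = φ(x, y) · (1/x + 1/y)` with `φ(x, y) = x y f(x, y) / (x + y)`. Every vertex `v`
lies on `d(v)` edges, so `∑_{uv ∈ E(G)} (1/d(u) + 1/d(v)) = ∑_v d(v) · (1/d(v)) = |G|`; bounding
`φ(d(u), d(v))` below by its minimum over degree pairs on each edge gives the claim.
-/

open Finset

namespace SimpleGraph

variable {V : Type*} [Fintype V] (G : SimpleGraph V) [DecidableRel G.Adj]

theorem sum_edgeFinset_lift_add {M : Type*} [AddCommMonoid M] (g : V → M) :
    ∑ e ∈ G.edgeFinset, Sym2.lift ⟨fun u v => g u + g v, fun _ _ => add_comm _ _⟩ e =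
      ∑ v, G.degree v • g v := by
  classical
  have hedge : ∀ e ∈ G.edgeFinset,
      Sym2.lift ⟨fun u v => g u + g v, fun _ _ => add_comm _ _⟩ e =
        ∑ v, if v ∈ e then g v else 0 := by
    rintro ⟨u, w⟩ he
    have huw : u ≠ w := G.ne_of_adj (mem_edgeFinset.1 he)
    have hsplit : ∀ v, (if v ∈ s(u, w) then g v else 0) =
        (if u = v then g v else 0) + (if w = v then g v else 0) := by
      intro v
      by_cases hu : u = v <;> by_cases hw : w = v <;> simp_all [eq_comm]
    simp only [hsplit, sum_add_distrib, sum_ite_eq, mem_univ, if_true, Sym2.lift_mk]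
  calc ∑ e ∈ G.edgeFinset, Sym2.lift ⟨fun u v => g u + g v, fun _ _ => add_comm _ _⟩ e
      = ∑ e ∈ G.edgeFinset, ∑ v, if v ∈ e then g v else 0 := sum_congr rfl hedge
    _ = ∑ v, ∑ e ∈ G.edgeFinset, if v ∈ e then g v else 0 := sum_comm
    _ = ∑ v, G.degree v • g v := by
      refine sum_congr rfl fun v _ => ?_
      rw [← sum_filter, sum_const, ← incidenceFinset_eq_filter, card_incidenceFinset_eq_degree]

theorem sum_edgeFinset_inv_degree_add {K : Type*} [DivisionSemiring K] [CharZero K]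
    (hdeg : ∀ v, G.degree v ≠ 0) :
    ∑ e ∈ G.edgeFinset, Sym2.lift ⟨fun u v => (G.degree u : K)⁻¹ + (G.degree v : K)⁻¹,
      fun _ _ => add_comm _ _⟩ e = Fintype.card V := by
  rw [sum_edgeFinset_lift_add, Fintype.card_eq_sum_ones, Nat.cast_sum]
  refine sum_congr rfl fun v _ => ?_
  rw [nsmul_eq_mul, mul_inv_cancel₀ (Nat.cast_ne_zero.2 (hdeg v)), Nat.cast_one]

end SimpleGraph

theorem mul_inv_add_inv_le_of_le_div {K : Type*} [Field K] [LinearOrder K] [IsStrictOrderedRing K]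
    {c x y z : K} (hx : 0 < x) (hy : 0 < y) (h : c ≤ x * y * z / (x + y)) :
    c * (x⁻¹ + y⁻¹) ≤ z := by
  calc c * (x⁻¹ + y⁻¹) ≤ x * y * z / (x + y) * (x⁻¹ + y⁻¹) := by gcongr
    _ = z := by field_simp; ring

theorem degree_based_index_lower_bound_general {V : Type*} [Fintype V]
    (G : SimpleGraph V) [DecidableRel G.Adj]
    (δ Δ : ℕ) (hδ : 1 ≤ δ)
    (f : ℝ → ℝ → ℝ) (hf : ∀ x y : ℝ, f x y = f y x)
    (a b : ℕ)
    (hmin : ∀ a' b' : ℕ, a' ∈ Finset.Icc δ Δ → b' ∈ Finset.Icc δ Δ → a' ≤ b' →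
      (a : ℝ) * b * f a b / (a + b) ≤ (a' : ℝ) * b' * f a' b' / (a' + b'))
    (hmindeg : ∀ v : V, δ ≤ G.degree v) (hmaxdeg : ∀ v : V, G.degree v ≤ Δ) :
    (a : ℝ) * b * f a b / (a + b) * Fintype.card V ≤
      ∑ e ∈ G.edgeFinset,
        Sym2.lift ⟨fun u v => f (G.degree u) (G.degree v), fun u v => hf _ _⟩ e := by
  set c : ℝ := (a : ℝ) * b * f a b / (a + b)
  have hdeg_mem (v : V) : G.degree v ∈ Icc δ Δ := mem_Icc.2 ⟨hmindeg v, hmaxdeg v⟩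
  have hdeg_pos (v : V) : 0 < G.degree v := hδ.trans (hmindeg v)
  have hc (u v : V) : c ≤ (G.degree u : ℝ) * G.degree v * f (G.degree u) (G.degree v) /
      (G.degree u + G.degree v) := by
    rcases le_total (G.degree u) (G.degree v) with huv | hvu
    · exact hmin _ _ (hdeg_mem u) (hdeg_mem v) huv
    · simpa only [hf, mul_comm, add_comm] using hmin _ _ (hdeg_mem v) (hdeg_mem u) hvu
  calc c * Fintype.card V
      = ∑ e ∈ G.edgeFinset, c * Sym2.lift ⟨fun u v => (G.degree u : ℝ)⁻¹ + (G.degree v : ℝ)⁻¹,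
          fun _ _ => add_comm _ _⟩ e := by
        rw [← mul_sum, G.sum_edgeFinset_inv_degree_add fun v => (hdeg_pos v).ne']
    _ ≤ _ := by
      refine sum_le_sum fun e _ => ?_
      induction e using Sym2.ind with
      | h u v =>
        exact mul_inv_add_inv_le_of_le_div (mod_cast hdeg_pos u) (mod_cast hdeg_pos v) (hc u v)

/-- **Theorem (general degree-based index lower bound).**
If `a ≤ b` in `{δ, …, Δ}` minimise `a·b·f(a,b)/(a+b)`, then any graph `G` with
minimum degree at least `δ` and maximum degree at most `Δ` satisfies
`F(G) ≥ (a·b·f(a,b)/(a+b))·|G|`, where `F(G) = ∑_{uv ∈ E(G)} f(d(u), d(v))`. -/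
theorem degree_based_index_lower_bound {V : Type*} [Fintype V] [DecidableEq V]
    (G : SimpleGraph V) [DecidableRel G.Adj]
    (δ Δ : ℕ) (hδ : 1 ≤ δ) (hδΔ : δ ≤ Δ)
    (f : ℝ → ℝ → ℝ) (hf : ∀ x y : ℝ, f x y = f y x)
    (a b : ℕ) (ha : a ∈ Finset.Icc δ Δ) (hb : b ∈ Finset.Icc δ Δ) (hab : a ≤ b)
    (hmin : ∀ a' b' : ℕ, a' ∈ Finset.Icc δ Δ → b' ∈ Finset.Icc δ Δ → a' ≤ b' →
      (a : ℝ) * b * f a b / (a + b) ≤ (a' : ℝ) * b' * f a' b' / (a' + b'))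
    (hmindeg : ∀ v : V, δ ≤ G.degree v) (hmaxdeg : ∀ v : V, G.degree v ≤ Δ) :
    (a : ℝ) * b * f a b / (a + b) * Fintype.card V ≤
      ∑ e ∈ G.edgeFinset,
        Sym2.lift ⟨fun u v => f (G.degree u) (G.degree v), fun u v => hf _ _⟩ e :=
  degree_based_index_lower_bound_general G δ Δ hδ f hf a b hmin hmindeg hmaxdeg
end

section
/- Let Δ ≥ δ ≥ 1 be integers and let f : ℝ → ℝ → ℝ be a symmetric function. Define F(G) = ∑_{uv ∈ E(G)} f(d(u), d(v)). Suppose the pair (a,b) with a, b ∈ {δ, …, Δ}, a ≤ b, is the UNIQUE minimiser of a·b·f(a,b)/(a+b) over all such pairs. If G is a finite simple graph with minimum degree at least δ and maximum degree at most Δ and F(G) = (a·b·f(a,b)/(a+b))·|G|, then G is (a,b)-biregular. -/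
open Finset SimpleGraph

lemma sum_lift_add_aux {V : Type*} [Fintype V] [DecidableEq V]
    (G : SimpleGraph V) [DecidableRel G.Adj] (g : V → ℝ) :
    ∑ e ∈ G.edgeFinset,
        Sym2.lift ⟨fun u v => g u + g v, fun u v => add_comm _ _⟩ e
      = ∑ v, (G.degree v : ℝ) * g v := by
  have h1 : ∑ d : G.Dart, g d.fst = ∑ v, (G.degree v : ℝ) * g v := by
    rw [← Finset.sum_fiberwise_of_maps_to
        (g := fun d : G.Dart => d.fst) (fun d _ => Finset.mem_univ d.fst)
        (fun d => g d.fst)]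
    refine Finset.sum_congr rfl fun v _ => ?_
    have hcongr : ∀ d ∈ Finset.univ.filter (fun d : G.Dart => d.fst = v),
        g d.fst = g v := by
      intro d hd
      rw [Finset.mem_filter] at hd
      rw [hd.2]
    rw [Finset.sum_congr rfl hcongr, Finset.sum_const, nsmul_eq_mul]
    congr 1
    exact_mod_cast G.dart_fst_fiber_card_eq_degree v
  have h2 : ∑ d : G.Dart, g d.fst =
      ∑ e ∈ G.edgeFinset,
        Sym2.lift ⟨fun u v => g u + g v, fun u v => add_comm _ _⟩ e := by
    rw [← Finset.sum_fiberwise_of_maps_to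
        (g := fun d : G.Dart => d.edge) (t := G.edgeFinset)
        (fun d _ => by rw [mem_edgeFinset]; exact d.edge_mem)
        (fun d => g d.fst)]
    refine Finset.sum_congr rfl fun e he => ?_
    induction e using Sym2.ind with
    | _ u v =>
      rw [mem_edgeFinset, mem_edgeSet] at he
      let d0 : G.Dart := ⟨(u, v), he⟩
      have hfib : Finset.univ.filter (fun d : G.Dart => d.edge = s(u, v))
          = {d0, d0.symm} := by
        have := d0.edge_fiber
        convert this
        rfl
      rw [hfib, Finset.sum_insert (by simp [Finset.mem_singleton]; exact d0.symm_ne.symm),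
        Finset.sum_singleton, Sym2.lift_mk]
      rfl
  rw [← h2, h1]


/-- **Theorem (equality case).**
If `(a,b)` with `a ≤ b` in `{δ, …, Δ}` is the *unique* minimiser of `a·b·f(a,b)/(a+b)`
and a graph `G` with degrees in `[δ, Δ]` attains `F(G) = (a·b·f(a,b)/(a+b))·|G|`,
then `G` is `(a,b)`-biregular. -/
theorem biregular_of_degree_based_index_eq {V : Type*} [Fintype V] [DecidableEq V]
    (G : SimpleGraph V) [DecidableRel G.Adj]
    (δ Δ : ℕ) (hδ : 1 ≤ δ) (hδΔ : δ ≤ Δ)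
    (f : ℝ → ℝ → ℝ) (hf : ∀ x y : ℝ, f x y = f y x)
    (a b : ℕ) (ha : a ∈ Finset.Icc δ Δ) (hb : b ∈ Finset.Icc δ Δ) (hab : a ≤ b)
    (hmin : ∀ a' b' : ℕ, a' ∈ Finset.Icc δ Δ → b' ∈ Finset.Icc δ Δ → a' ≤ b' →
      (a', b') ≠ (a, b) →
      (a : ℝ) * b * f a b / (a + b) < (a' : ℝ) * b' * f a' b' / (a' + b'))
    (hmindeg : ∀ v : V, δ ≤ G.degree v) (hmaxdeg : ∀ v : V, G.degree v ≤ Δ)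
    (heq : ∑ e ∈ G.edgeFinset,
        Sym2.lift ⟨fun u v => f (G.degree u) (G.degree v), fun u v => hf _ _⟩ e =
      (a : ℝ) * b * f a b / (a + b) * Fintype.card V) :
    (∀ v : V, G.degree v = a ∨ G.degree v = b) ∧
      (∀ u v : V, G.Adj u v →
        (G.degree u = a ∧ G.degree v = b) ∨ (G.degree u = b ∧ G.degree v = a)) := by
  classical
  set c : ℝ := (a : ℝ) * b * f a b / (a + b) with hc
  -- positivity of degrees
  have hdegpos : ∀ v : V, (0 : ℝ) < (G.degree v : ℝ) := fun v => by
    have : 0 < G.degree v := lt_of_lt_of_le hδ (hmindeg v)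
    exact_mod_cast this
  -- key minimality fact over ℕ pairs
  have key : ∀ x y : ℕ, δ ≤ x → x ≤ Δ → δ ≤ y → y ≤ Δ →
      c ≤ (x : ℝ) * y * f x y / (x + y) := by
    intro x y hx1 hx2 hy1 hy2
    have hsymm : (x : ℝ) * y * f x y / (x + y) = (y : ℝ) * x * f y x / (y + x) := by
      rw [hf, mul_comm (x:ℝ) y, add_comm (x:ℝ) y]
    rcases le_total x y with h | h
    · rcases eq_or_ne (x, y) (a, b) with he | hne
      · obtain ⟨rfl, rfl⟩ := Prod.mk.inj he
        rw [hc]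
      · exact le_of_lt (hmin x y (Finset.mem_Icc.2 ⟨hx1, hx2⟩)
          (Finset.mem_Icc.2 ⟨hy1, hy2⟩) h hne)
    · rw [hsymm]
      rcases eq_or_ne (y, x) (a, b) with he | hne
      · obtain ⟨rfl, rfl⟩ := Prod.mk.inj he
        rw [hc]
      · exact le_of_lt (hmin y x (Finset.mem_Icc.2 ⟨hy1, hy2⟩)
          (Finset.mem_Icc.2 ⟨hx1, hx2⟩) h hne)
  have keyeq : ∀ x y : ℕ, δ ≤ x → x ≤ Δ → δ ≤ y → y ≤ Δ →
      c = (x : ℝ) * y * f x y / (x + y) →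
      (x = a ∧ y = b) ∨ (x = b ∧ y = a) := by
    intro x y hx1 hx2 hy1 hy2 hceq
    have hsymm : (x : ℝ) * y * f x y / (x + y) = (y : ℝ) * x * f y x / (y + x) := by
      rw [hf, mul_comm (x:ℝ) y, add_comm (x:ℝ) y]
    rcases le_total x y with h | h
    · have : (x, y) = (a, b) := by
        by_contra hne
        exact absurd hceq (ne_of_lt (hmin x y (Finset.mem_Icc.2 ⟨hx1, hx2⟩)
          (Finset.mem_Icc.2 ⟨hy1, hy2⟩) h hne))
      obtain ⟨rfl, rfl⟩ := Prod.mk.inj this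
      exact Or.inl ⟨rfl, rfl⟩
    · have : (y, x) = (a, b) := by
        by_contra hne
        rw [hsymm] at hceq
        exact absurd hceq (ne_of_lt (hmin y x (Finset.mem_Icc.2 ⟨hy1, hy2⟩)
          (Finset.mem_Icc.2 ⟨hx1, hx2⟩) h hne))
      obtain ⟨rfl, rfl⟩ := Prod.mk.inj this
      exact Or.inr ⟨rfl, rfl⟩
  -- algebraic identity
  have hid : ∀ x y : ℝ, 0 < x → 0 < y →
      f x y - c * (1 / x + 1 / y) = ((x + y) / (x * y)) * (x * y * f x y / (x + y) - c) := by
    intro x y hx hy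
    have hxy : x + y ≠ 0 := by positivity
    field_simp
    ring
  -- the second sum
  have hS2 : ∑ e ∈ G.edgeFinset,
      Sym2.lift ⟨fun u v => (1 : ℝ) / (G.degree u) + 1 / (G.degree v),
        fun u v => add_comm _ _⟩ e = (Fintype.card V : ℝ) := by
    rw [sum_lift_add_aux]
    have : ∀ v ∈ Finset.univ, (G.degree v : ℝ) * (1 / (G.degree v)) = 1 := by
      intro v _
      rw [mul_one_div, div_self (hdegpos v).ne']
    rw [Finset.sum_congr rfl this, Finset.sum_const, nsmul_eq_mul, mul_one,
      Finset.card_univ]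
  -- total sum of nonneg terms is zero
  have hsum0 : ∑ e ∈ G.edgeFinset,
      (Sym2.lift ⟨fun u v => f (G.degree u) (G.degree v), fun u v => hf _ _⟩ e
        - c * Sym2.lift ⟨fun u v => (1 : ℝ) / (G.degree u) + 1 / (G.degree v),
            fun u v => add_comm _ _⟩ e) = 0 := by
    rw [Finset.sum_sub_distrib, heq, ← Finset.mul_sum, hS2, sub_self]
  -- pairwise nonnegativity
  have hpair : ∀ u v : V, G.Adj u v →
      0 ≤ f (G.degree u) (G.degree v)
        - c * (1 / (G.degree u : ℝ) + 1 / (G.degree v : ℝ)) := by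
    intro u v _
    rw [hid _ _ (hdegpos u) (hdegpos v)]
    have h1 : (0:ℝ) ≤ ((G.degree u : ℝ) + G.degree v) / ((G.degree u : ℝ) * G.degree v) := by
      positivity
    exact mul_nonneg h1 (sub_nonneg.2 (key _ _ (hmindeg u) (hmaxdeg u) (hmindeg v) (hmaxdeg v)))
  have hnn : ∀ e ∈ G.edgeFinset,
      0 ≤ Sym2.lift ⟨fun u v => f (G.degree u) (G.degree v), fun u v => hf _ _⟩ e
        - c * Sym2.lift ⟨fun u v => (1 : ℝ) / (G.degree u) + 1 / (G.degree v),
            fun u v => add_comm _ _⟩ e := by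
    intro e
    induction e using Sym2.ind with
    | _ u v =>
      intro he
      rw [mem_edgeFinset, mem_edgeSet] at he
      simpa using hpair u v he
  have hterm0 := (Finset.sum_eq_zero_iff_of_nonneg hnn).1 hsum0
  -- adjacency conclusion
  have hadj : ∀ u v : V, G.Adj u v →
      (G.degree u = a ∧ G.degree v = b) ∨ (G.degree u = b ∧ G.degree v = a) := by
    intro u v huv
    have hmem : s(u, v) ∈ G.edgeFinset := by
      rw [mem_edgeFinset, mem_edgeSet]; exact huv
    have h0 := hterm0 _ hmem
    simp only [Sym2.lift_mk] at h0
    rw [hid _ _ (hdegpos u) (hdegpos v)] at h0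
    have hpos2 : (0:ℝ) < ((G.degree u : ℝ) + G.degree v) / ((G.degree u : ℝ) * G.degree v) := by
      have := hdegpos u; have := hdegpos v; positivity
    have h3 : (G.degree u : ℝ) * G.degree v * f (G.degree u) (G.degree v)
        / ((G.degree u : ℝ) + G.degree v) - c = 0 := by
      rcases mul_eq_zero.1 h0 with h | h
      · exact absurd h hpos2.ne'
      · exact h
    exact keyeq _ _ (hmindeg u) (hmaxdeg u) (hmindeg v) (hmaxdeg v)
      (by linarith [sub_eq_zero.1 h3])
  refine ⟨fun v => ?_, hadj⟩
  have hne : (G.neighborFinset v).Nonempty := by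
    rw [← Finset.card_pos, G.card_neighborFinset_eq_degree]
    exact lt_of_lt_of_le hδ (hmindeg v)
  obtain ⟨u, hu⟩ := hne
  rw [mem_neighborFinset] at hu
  rcases hadj v u hu with ⟨h, _⟩ | ⟨h, _⟩
  · exact Or.inl h
  · exact Or.inr h
end

section
/- Let Δ ≥ δ ≥ 1 be integers. Every finite simple graph G with minimum degree at least δ and maximum degree at most Δ satisfies R(G) ≥ (√(δ·Δ)/(δ+Δ))·|G|, where R(G) = ∑_{uv ∈ E(G)} (d(u)·d(v))^{-1/2} is the Randić index and |G| is the number of vertices. -/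
/-!
Summing `1/d(u) + 1/d(v)` over the edges `uv` counts every vertex `v` exactly `d(v)` times with
weight `1/d(v)`; as no degree vanishes, the sum is `|G|`. The bound then holds edge by
edge: for `x, y ∈ [δ, Δ]` we have `√(δΔ)(x + y) ≤ (δ + Δ)√(xy)`, since the difference of the
squares is `(Δy - δx)(Δx - δy) ≥ 0`.
-/

open Finset

namespace SimpleGraph

variable {V : Type*} [Fintype V] [DecidableEq V] (G : SimpleGraph V) [DecidableRel G.Adj]
  {M : Type*} [AddCommMonoid M]

theorem sum_dart_fst_eq_sum_degree_smul (f : V → M) :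
    ∑ d : G.Dart, f d.fst = ∑ v, G.degree v • f v := by
  rw [← sum_fiberwise univ (fun d : G.Dart => d.fst)]
  refine sum_congr rfl fun v _ => ?_
  rw [sum_congr rfl fun d hd => congrArg f (mem_filter.1 hd).2, sum_const,
    dart_fst_fiber_card_eq_degree]

theorem sum_edgeFinset_lift_add_eq_sum_dart_fst (f : V → M) :
    ∑ e ∈ G.edgeFinset, Sym2.lift ⟨fun u v => f u + f v, fun _ _ => add_comm _ _⟩ e
      = ∑ d : G.Dart, f d.fst := by
  rw [← sum_fiberwise_of_maps_to (t := G.edgeFinset) (g := Dart.edge)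
    fun d _ => mem_edgeFinset.2 d.edge_mem]
  refine sum_congr rfl fun e he => ?_
  induction e using Sym2.ind with
  | _ u v =>
    let d : G.Dart := ⟨(u, v), mem_edgeFinset.1 he⟩
    change _ = ∑ d' : G.Dart with d'.edge = d.edge, f d'.fst
    rw [d.edge_fiber, sum_pair d.symm_ne.symm]
    rfl

theorem sum_edgeFinset_lift_add_eq_sum_degree_smul (f : V → M) :
    ∑ e ∈ G.edgeFinset, Sym2.lift ⟨fun u v => f u + f v, fun _ _ => add_comm _ _⟩ e
      = ∑ v, G.degree v • f v := by
  rw [sum_edgeFinset_lift_add_eq_sum_dart_fst, sum_dart_fst_eq_sum_degree_smul]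

theorem sum_edgeFinset_inv_degree_add_inv_degree_eq_card {K : Type*} [DivisionSemiring K]
    [CharZero K] (h : ∀ v, 0 < G.degree v) :
    ∑ e ∈ G.edgeFinset,
      Sym2.lift ⟨fun u v => (G.degree u : K)⁻¹ + (G.degree v : K)⁻¹, fun _ _ => add_comm _ _⟩ e
      = Fintype.card V := by
  rw [sum_edgeFinset_lift_add_eq_sum_degree_smul]
  simp [nsmul_eq_mul, (h _).ne']

end SimpleGraph

theorem mul_mul_add_sq_le_add_sq_mul_mul {R : Type*} [CommRing R] [LinearOrder R]
    [IsStrictOrderedRing R] {a b x y : R} (ha : 0 ≤ a) (hax : a ≤ x) (hxb : x ≤ b)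
    (hay : a ≤ y) (hyb : y ≤ b) : a * b * (x + y) ^ 2 ≤ (a + b) ^ 2 * (x * y) := by
  have hx : a * x ≤ b * y := by nlinarith
  have hy : a * y ≤ b * x := by nlinarith
  nlinarith [mul_nonneg (sub_nonneg.2 hx) (sub_nonneg.2 hy)]

namespace Real

theorem sqrt_mul_mul_add_le_add_mul_sqrt_mul {a b x y : ℝ} (ha : 0 ≤ a) (hax : a ≤ x)
    (hxb : x ≤ b) (hay : a ≤ y) (hyb : y ≤ b) : √(a * b) * (x + y) ≤ (a + b) * √(x * y) := by
  have hx : 0 ≤ x + y := by linarith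
  have hab : 0 ≤ a + b := by linarith
  calc √(a * b) * (x + y) = √(a * b * (x + y) ^ 2) := by
        rw [sqrt_mul' (a * b) (sq_nonneg (x + y)), sqrt_sq hx]
    _ ≤ √((a + b) ^ 2 * (x * y)) :=
        sqrt_le_sqrt (mul_mul_add_sq_le_add_sq_mul_mul ha hax hxb hay hyb)
    _ = (a + b) * √(x * y) := by
        rw [sqrt_mul (by positivity), sqrt_sq hab]

theorem sqrt_mul_div_add_mul_inv_add_inv_le_rpow {a b x y : ℝ} (ha : 0 < a) (hax : a ≤ x)
    (hxb : x ≤ b) (hay : a ≤ y) (hyb : y ≤ b) :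
    √(a * b) / (a + b) * (x⁻¹ + y⁻¹) ≤ (x * y) ^ (-(1 / 2) : ℝ) := by
  have hx : 0 < x := ha.trans_le hax
  have hy : 0 < y := ha.trans_le hay
  have hxy : 0 < √(x * y) := sqrt_pos.2 (by positivity)
  rw [rpow_neg (by positivity), ← sqrt_eq_rpow, div_mul_eq_mul_div, div_le_iff₀ (by linarith)]
  calc √(a * b) * (x⁻¹ + y⁻¹) = √(a * b) * (x + y) / (√(x * y) * √(x * y)) := by
        rw [mul_self_sqrt (by positivity)]; field_simp; ring
    _ ≤ (a + b) * √(x * y) / (√(x * y) * √(x * y)) := by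
        gcongr ?_ / _
        exact sqrt_mul_mul_add_le_add_mul_sqrt_mul ha.le hax hxb hay hyb
    _ = (√(x * y))⁻¹ * (a + b) := by field_simp

end Real

/-- **Theorem (O–Shi lower bound for the Randić index).**
Every graph `G` with minimum degree at least `δ ≥ 1` and maximum degree at most `Δ`
satisfies `R(G) ≥ (√(δ·Δ)/(δ+Δ))·|G|`, where
`R(G) = ∑_{uv ∈ E(G)} (d(u)·d(v))^{-1/2}`. -/
theorem randic_index_lower_bound {V : Type*} [Fintype V]
    (G : SimpleGraph V) [DecidableRel G.Adj]
    (δ Δ : ℕ) (hδ : 1 ≤ δ)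
    (hmindeg : ∀ v : V, δ ≤ G.degree v) (hmaxdeg : ∀ v : V, G.degree v ≤ Δ) :
    Real.sqrt ((δ : ℝ) * Δ) / ((δ : ℝ) + Δ) * Fintype.card V ≤
      ∑ e ∈ G.edgeFinset,
        Sym2.lift ⟨fun u v => ((G.degree u : ℝ) * (G.degree v : ℝ)) ^ (-(1 / 2) : ℝ),
          fun u v => by simp [mul_comm]⟩ e := by
  classical
  have hdeg : ∀ v, 0 < G.degree v := fun v => hδ.trans (hmindeg v)
  rw [← G.sum_edgeFinset_inv_degree_add_inv_degree_eq_card (K := ℝ) hdeg, mul_sum]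
  refine sum_le_sum fun e _ => ?_
  induction e using Sym2.ind with
  | _ u v =>
    exact Real.sqrt_mul_div_add_mul_inv_add_inv_le_rpow (by exact_mod_cast hδ)
      (by exact_mod_cast hmindeg u) (by exact_mod_cast hmaxdeg u)
      (by exact_mod_cast hmindeg v) (by exact_mod_cast hmaxdeg v)
end

section
/- Let G be a finite simple graph with minimum degree at least 1. Then R(G) = |G|/2 if and only if every edge of G joins two vertices of equal degree (equivalently, every connected component of G is regular), where R(G) = ∑_{uv ∈ E(G)} (d(u)·d(v))^{-1/2}. -/
open Finset

/-- Weighted handshake: summing `g u + g v` over edges equals `∑ v, deg v * g v`. -/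
private lemma sum_edges_lift_add {V : Type*} [Fintype V] [DecidableEq V]
    (G : SimpleGraph V) [DecidableRel G.Adj] (g : V → ℝ) :
    ∑ e ∈ G.edgeFinset,
        Sym2.lift ⟨fun u v => g u + g v, fun u v => by ring⟩ e
      = ∑ v : V, (G.degree v : ℝ) * g v := by
  set F : Sym2 V → ℝ := Sym2.lift ⟨fun u v => g u + g v, fun u v => by ring⟩ with hF
  have hfst : ∑ d : G.Dart, g d.fst = ∑ v : V, (G.degree v : ℝ) * g v := by
    rw [← Finset.sum_fiberwise_of_maps_to' (t := Finset.univ)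
        (g := fun d : G.Dart => d.fst) (fun d _ => Finset.mem_univ _) g]
    refine Finset.sum_congr rfl fun v _ => ?_
    rw [Finset.sum_const, nsmul_eq_mul]
    congr 1
    exact_mod_cast congrArg (Nat.cast : ℕ → ℝ) (G.dart_fst_fiber_card_eq_degree v)
  have hsnd : ∑ d : G.Dart, g d.snd = ∑ d : G.Dart, g d.fst :=
    Fintype.sum_equiv (SimpleGraph.Dart.symm_involutive (G := G)).toPerm _ _
      (fun d => rfl)
  have hdart : ∑ d : G.Dart, F d.edge = 2 * ∑ v : V, (G.degree v : ℝ) * g v := by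
    have h : ∀ d : G.Dart, F d.edge = g d.fst + g d.snd := fun d => rfl
    rw [Finset.sum_congr rfl fun d _ => h d, Finset.sum_add_distrib, hsnd, hfst]
    ring
  have hedge : ∑ d : G.Dart, F d.edge = 2 * ∑ e ∈ G.edgeFinset, F e := by
    rw [← Finset.sum_fiberwise_of_maps_to' (t := G.edgeFinset)
        (g := fun d : G.Dart => d.edge)
        (fun d _ => by rw [SimpleGraph.mem_edgeFinset]; exact d.edge_mem) F]
    rw [Finset.mul_sum]
    refine Finset.sum_congr rfl fun e he => ?_
    rw [Finset.sum_const, nsmul_eq_mul]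
    rw [show ((#{d : G.Dart | d.edge = e} : ℕ) : ℝ) = 2 by
      exact_mod_cast congrArg (Nat.cast : ℕ → ℝ)
        (G.dart_edge_fiber_card e (SimpleGraph.mem_edgeFinset.mp he))]
  have h2 := hedge.symm.trans hdart
  linarith

private lemma amgm_rpow {x y : ℝ} (hx : 0 < x) (hy : 0 < y) :
    (x * y) ^ (-(1 / 2) : ℝ) ≤ 1 / (2 * x) + 1 / (2 * y) ∧
      ((x * y) ^ (-(1 / 2) : ℝ) = 1 / (2 * x) + 1 / (2 * y) ↔ x = y) := by
  have hxy : 0 < x * y := mul_pos hx hy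
  have hs : 0 < Real.sqrt x := Real.sqrt_pos.mpr hx
  have ht : 0 < Real.sqrt y := Real.sqrt_pos.mpr hy
  set s := Real.sqrt x with hsdef
  set t := Real.sqrt y with htdef
  have hsx : s ^ 2 = x := Real.sq_sqrt hx.le
  have htx : t ^ 2 = y := Real.sq_sqrt hy.le
  have hrw : (x * y) ^ (-(1 / 2) : ℝ) = (s * t)⁻¹ := by
    rw [Real.rpow_neg hxy.le, ← Real.sqrt_eq_rpow, Real.sqrt_mul hx.le]
  have key : 1 / (2 * x) + 1 / (2 * y) - (s * t)⁻¹ = (s - t) ^ 2 / (2 * (x * y)) := by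
    rw [← hsx, ← htx]
    field_simp
    ring
  have hnn : (0 : ℝ) ≤ (s - t) ^ 2 / (2 * (x * y)) :=
    div_nonneg (sq_nonneg _) (by linarith)
  constructor
  · rw [hrw]; linarith
  · rw [hrw]
    constructor
    · intro h
      have h0 : (s - t) ^ 2 / (2 * (x * y)) = 0 := by linarith
      have h1 : (s - t) ^ 2 = 0 := by
        rcases div_eq_zero_iff.mp h0 with h1 | h1
        · exact h1
        · exact absurd h1 (by positivity)
      have hst : s = t := by nlinarith [sq_nonneg (s - t)]
      rw [← hsx, ← htx, hst]
    · intro h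
      have hst : s = t := by rw [hsdef, htdef, h]
      rw [hst] at key ⊢
      have h0 : ((t - t) ^ 2 / (2 * (x * y)) : ℝ) = 0 := by simp
      linarith

/-- **Theorem (equality case of the upper bound).**
For a graph `G` with minimum degree at least 1, `R(G) = |G|/2` holds if and only if
every edge of `G` joins two vertices of equal degree (equivalently, every connected
component of `G` is regular). -/
theorem randic_index_eq_half_card_iff {V : Type*} [Fintype V] [DecidableEq V]
    (G : SimpleGraph V) [DecidableRel G.Adj]
    (hmindeg : ∀ v : V, 1 ≤ G.degree v) :
    (∑ e ∈ G.edgeFinset,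
        Sym2.lift ⟨fun u v => ((G.degree u : ℝ) * (G.degree v : ℝ)) ^ (-(1 / 2) : ℝ),
          fun u v => by simp [mul_comm]⟩ e =
      (Fintype.card V : ℝ) / 2) ↔
    (∀ u v : V, G.Adj u v → G.degree u = G.degree v) := by
  have hdegpos : ∀ v : V, (0 : ℝ) < G.degree v := fun v => by
    exact_mod_cast Nat.lt_of_lt_of_le Nat.zero_lt_one (hmindeg v)
  set W : Sym2 V → ℝ := Sym2.lift ⟨fun u v =>
      ((G.degree u : ℝ) * (G.degree v : ℝ)) ^ (-(1 / 2) : ℝ),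
      fun u v => by simp [mul_comm]⟩ with hWdef
  set g : V → ℝ := fun v => 1 / (2 * (G.degree v : ℝ)) with hgdef
  set C : Sym2 V → ℝ := Sym2.lift ⟨fun u v => g u + g v, fun u v => by ring⟩ with hCdef
  have hCsum : ∑ e ∈ G.edgeFinset, C e = (Fintype.card V : ℝ) / 2 := by
    rw [hCdef, sum_edges_lift_add G g]
    have : ∀ v : V, (G.degree v : ℝ) * g v = 1 / 2 := fun v => by
      rw [hgdef]
      field_simp [(hdegpos v).ne']
    rw [Finset.sum_congr rfl fun v _ => this v, Finset.sum_const, nsmul_eq_mul,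
      Finset.card_univ]
    ring
  have hle : ∀ e ∈ G.edgeFinset, W e ≤ C e := by
    intro e he
    induction e using Sym2.ind with
    | _ u v =>
      exact (amgm_rpow (hdegpos u) (hdegpos v)).1
  constructor
  · intro hsum u v huv
    have hWC : ∑ e ∈ G.edgeFinset, W e = ∑ e ∈ G.edgeFinset, C e := by
      rw [hsum, hCsum]
    have hkey := (Finset.sum_eq_sum_iff_of_le hle).mp hWC
    have hmem : s(u, v) ∈ G.edgeFinset := by
      rw [SimpleGraph.mem_edgeFinset]
      exact huv
    have heq := hkey _ hmem
    have : (G.degree u : ℝ) = (G.degree v : ℝ) :=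
      ((amgm_rpow (hdegpos u) (hdegpos v)).2).mp heq
    exact_mod_cast this
  · intro h
    rw [← hCsum]
    refine Finset.sum_congr rfl fun e he => ?_
    induction e using Sym2.ind with
    | _ u v =>
      have hadj : G.Adj u v := SimpleGraph.mem_edgeFinset.mp he
      have : (G.degree u : ℝ) = (G.degree v : ℝ) := by exact_mod_cast h u v hadj
      exact ((amgm_rpow (hdegpos u) (hdegpos v)).2).mpr this
end

section
/- Let Δ > δ ≥ 1 be integers and let α be a real number with α < -1/2. Then every finite simple graph G with minimum degree at least δ and maximum degree at most Δ satisfies R_α(G) ≤ (δ^{1+2α}/2)·|G|, with equality if and only if G is δ-regular, where R_α(G) = ∑_{uv ∈ E(G)} (d(u)·d(v))^α. -/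
open Real

lemma pt_le {α d x y : ℝ} (hα : α < -(1/2)) (hd : 0 < d) (hx : d ≤ x) (hy : d ≤ y) :
    (x * y) ^ α ≤ d ^ (1 + 2*α) * (1/(2*x) + 1/(2*y)) := by
  have hx0 : 0 < x := hd.trans_le hx
  have hy0 : 0 < y := hd.trans_le hy
  have hxy0 : 0 < x * y := mul_pos hx0 hy0
  have hdd : d * d ≤ x * y := mul_le_mul hx hy hd.le hx0.le
  have step2 : (x*y) ^ (1/2 + α) ≤ (d*d) ^ (1/2 + α) :=
    Real.rpow_le_rpow_of_nonpos (mul_pos hd hd) hdd (by linarith)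
  have step3 : (d*d) ^ (1/2 + α) = d ^ (1 + 2*α) := by
    rw [show d*d = d^(2:ℕ) from (sq d).symm, ← Real.rpow_natCast, ← Real.rpow_mul hd.le]
    ring_nf
  have step4 : 2 * (x*y) ^ (1/2 : ℝ) ≤ x + y := by
    rw [← Real.sqrt_eq_rpow, Real.sqrt_mul hx0.le]
    nlinarith [Real.sq_sqrt hx0.le, Real.sq_sqrt hy0.le,
      sq_nonneg (Real.sqrt x - Real.sqrt y), Real.sqrt_nonneg x, Real.sqrt_nonneg y]
  have key : 2 * (x*y) ^ (1 + α) ≤ d ^ (1 + 2*α) * (x + y) := by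
    have e1 : (x*y) ^ (1 + α) = (x*y) ^ (1/2 : ℝ) * (x*y) ^ (1/2 + α) := by
      rw [← Real.rpow_add hxy0]; ring_nf
    have h5 : (x*y) ^ (1 + α) ≤ (x*y) ^ (1/2 : ℝ) * d ^ (1 + 2*α) := by
      rw [e1]; rw [step3] at step2
      exact mul_le_mul_of_nonneg_left step2 (Real.rpow_nonneg hxy0.le _)
    have hd' : 0 < d ^ (1 + 2*α) := Real.rpow_pos_of_pos hd _
    calc 2 * (x*y) ^ (1+α) ≤ 2 * ((x*y) ^ (1/2:ℝ) * d ^ (1+2*α)) := by linarith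
      _ ≤ d ^ (1+2*α) * (x+y) := by nlinarith
  have heq : 1/(2*x) + 1/(2*y) = (x + y) / (2*(x*y)) := by field_simp; ring
  rw [heq, ← mul_div_assoc, le_div_iff₀ (by positivity)]
  have : (x*y) ^ α * (2*(x*y)) = 2 * (x*y)^(1+α) := by
    rw [show (1:ℝ)+α = α+1 by ring, Real.rpow_add_one hxy0.ne']; ring
  rw [this]; linarith [key]

lemma pt_lt {α d x y : ℝ} (hα : α < -(1/2)) (hd : 0 < d) (hx : d ≤ x) (hy : d ≤ y)
    (hlt : d * d < x * y) :
    (x * y) ^ α < d ^ (1 + 2*α) * (1/(2*x) + 1/(2*y)) := by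
  have hx0 : 0 < x := hd.trans_le hx
  have hy0 : 0 < y := hd.trans_le hy
  have hxy0 : 0 < x * y := mul_pos hx0 hy0
  have step2 : (x*y) ^ (1/2 + α) < (d*d) ^ (1/2 + α) :=
    Real.rpow_lt_rpow_of_neg (mul_pos hd hd) hlt (by linarith)
  have step3 : (d*d) ^ (1/2 + α) = d ^ (1 + 2*α) := by
    rw [show d*d = d^(2:ℕ) from (sq d).symm, ← Real.rpow_natCast, ← Real.rpow_mul hd.le]
    ring_nf
  have step4 : 2 * (x*y) ^ (1/2 : ℝ) ≤ x + y := by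
    rw [← Real.sqrt_eq_rpow, Real.sqrt_mul hx0.le]
    nlinarith [Real.sq_sqrt hx0.le, Real.sq_sqrt hy0.le,
      sq_nonneg (Real.sqrt x - Real.sqrt y), Real.sqrt_nonneg x, Real.sqrt_nonneg y]
  have key : 2 * (x*y) ^ (1 + α) < d ^ (1 + 2*α) * (x + y) := by
    have e1 : (x*y) ^ (1 + α) = (x*y) ^ (1/2 : ℝ) * (x*y) ^ (1/2 + α) := by
      rw [← Real.rpow_add hxy0]; ring_nf
    have hpos : 0 < (x*y) ^ (1/2 : ℝ) := Real.rpow_pos_of_pos hxy0 _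
    have h5 : (x*y) ^ (1 + α) < (x*y) ^ (1/2 : ℝ) * d ^ (1 + 2*α) := by
      rw [e1]; rw [step3] at step2
      exact mul_lt_mul_of_pos_left step2 hpos
    have hd' : 0 < d ^ (1 + 2*α) := Real.rpow_pos_of_pos hd _
    calc 2 * (x*y) ^ (1+α) < 2 * ((x*y) ^ (1/2:ℝ) * d ^ (1+2*α)) := by linarith
      _ ≤ d ^ (1+2*α) * (x+y) := by nlinarith
  have heq : 1/(2*x) + 1/(2*y) = (x + y) / (2*(x*y)) := by field_simp; ring
  rw [heq, ← mul_div_assoc, lt_div_iff₀ (by positivity)]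
  have : (x*y) ^ α * (2*(x*y)) = 2 * (x*y)^(1+α) := by
    rw [show (1:ℝ)+α = α+1 by ring, Real.rpow_add_one hxy0.ne']; ring
  rw [this]; linarith [key]

lemma pt_eq {α d : ℝ} (hd : 0 < d) :
    (d * d) ^ α = d ^ (1 + 2*α) * (1/(2*d) + 1/(2*d)) := by
  have h1 : (d*d) ^ α = d ^ (2*α) := by
    rw [show d*d = d^(2:ℕ) from (sq d).symm, ← Real.rpow_natCast, ← Real.rpow_mul hd.le]
    norm_num
  have h2 : d ^ (1 + 2*α) = d * d ^ (2*α) := by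
    rw [Real.rpow_add hd, Real.rpow_one]
  rw [h1, h2]; field_simp; ring

open Finset

lemma sum_lift_add {V : Type*} [Fintype V] [DecidableEq V] (G : SimpleGraph V)
    [DecidableRel G.Adj] (f : V → ℝ) :
    ∑ e ∈ G.edgeFinset, Sym2.lift ⟨fun u v => f u + f v, fun u v => by ring⟩ e
      = ∑ v, (G.degree v : ℝ) * f v := by
  have h1 : ∑ e ∈ G.edgeFinset, ∑ d ∈ univ.filter (fun d : G.Dart => d.edge = e), f d.fst
      = ∑ d : G.Dart, f d.fst :=
    Finset.sum_fiberwise_of_maps_to (fun d _ => by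
      simp [SimpleGraph.mem_edgeFinset, d.edge_mem]) _
  have h2 : ∀ e ∈ G.edgeFinset,
      ∑ d ∈ univ.filter (fun d : G.Dart => d.edge = e), f d.fst
        = Sym2.lift ⟨fun u v => f u + f v, fun u v => by ring⟩ e := by
    intro e he
    rw [SimpleGraph.mem_edgeFinset] at he
    induction e with
    | h u v =>
      have hadj : G.Adj u v := he
      let d : G.Dart := ⟨(u, v), hadj⟩
      have hfib : univ.filter (fun d' : G.Dart => d'.edge = d.edge) = {d, d.symm} :=
        d.edge_fiber
      have hde : d.edge = s(u, v) := rfl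
      rw [← hde, hfib]
      rw [Finset.sum_pair d.symm_ne.symm]
      simp [d, SimpleGraph.Dart.symm]
  rw [Finset.sum_congr rfl h2] at h1
  have h1' : (∑ e ∈ G.edgeFinset, Sym2.lift ⟨fun u v => f u + f v, fun u v => by ring⟩ e)
      = ∑ d : G.Dart, f d.fst := h1
  rw [h1']
  have h3 : ∑ d : G.Dart, f d.fst
      = ∑ v, ∑ d ∈ univ.filter (fun d : G.Dart => d.fst = v), f d.fst :=
    (Finset.sum_fiberwise_of_maps_to (fun d _ => mem_univ _) _).symm
  rw [h3]
  refine Finset.sum_congr rfl fun v _ => ?_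
  rw [Finset.sum_congr rfl (fun d hd => by rw [(Finset.mem_filter.mp hd).2]),
    Finset.sum_const, ← G.dart_fst_fiber_card_eq_degree v]
  simp [nsmul_eq_mul]

/-- **Theorem (upper bound for `α < -1/2`).**
For `Δ > δ ≥ 1` and a real `α < -1/2`, every graph `G` with degrees in `[δ, Δ]`
satisfies `R_α(G) ≤ (δ^{1+2α}/2)·|G|`, with equality iff `G` is `δ`-regular. -/
theorem generalized_randic_upper_bound_of_lt_neg_half {V : Type*} [Fintype V] [DecidableEq V]
    (G : SimpleGraph V) [DecidableRel G.Adj]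
    (δ Δ : ℕ) (hδ : 1 ≤ δ) (hδΔ : δ < Δ)
    (α : ℝ) (hα : α < -(1 / 2))
    (hmindeg : ∀ v : V, δ ≤ G.degree v) (hmaxdeg : ∀ v : V, G.degree v ≤ Δ) :
    (∑ e ∈ G.edgeFinset,
        Sym2.lift ⟨fun u v => ((G.degree u : ℝ) * (G.degree v : ℝ)) ^ α,
          fun u v => by simp [mul_comm]⟩ e ≤
      (δ : ℝ) ^ (1 + 2 * α) / 2 * Fintype.card V) ∧
    ((∑ e ∈ G.edgeFinset,
        Sym2.lift ⟨fun u v => ((G.degree u : ℝ) * (G.degree v : ℝ)) ^ α,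
          fun u v => by simp [mul_comm]⟩ e =
      (δ : ℝ) ^ (1 + 2 * α) / 2 * Fintype.card V) ↔ G.IsRegularOfDegree δ) := by
  have hδ0 : (0:ℝ) < (δ : ℝ) := by exact_mod_cast Nat.lt_of_lt_of_le Nat.zero_lt_one hδ
  set g : V → ℝ := fun v => (δ:ℝ) ^ (1 + 2*α) * (1/(2*(G.degree v : ℝ))) with hg
  have hdegge : ∀ v, (δ:ℝ) ≤ (G.degree v : ℝ) := fun v => by exact_mod_cast hmindeg v
  have hdegpos : ∀ v, (0:ℝ) < (G.degree v : ℝ) := fun v => hδ0.trans_le (hdegge v)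
  have hle : ∀ e ∈ G.edgeFinset,
      Sym2.lift ⟨fun u v => ((G.degree u : ℝ) * (G.degree v : ℝ)) ^ α,
          fun u v => by simp [mul_comm]⟩ e
        ≤ Sym2.lift ⟨fun u v => g u + g v, fun u v => by ring⟩ e := by
    intro e he
    induction e with
    | h u v =>
      simp only [Sym2.lift_mk]
      have := pt_le (d := (δ:ℝ)) hα hδ0 (hdegge u) (hdegge v)
      simp only [hg]; linarith [this]
  have hsum : ∑ e ∈ G.edgeFinset, Sym2.lift ⟨fun u v => g u + g v, fun u v => by ring⟩ e
      = (δ : ℝ) ^ (1 + 2 * α) / 2 * Fintype.card V := by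
    refine (sum_lift_add G g).trans ?_
    have : ∀ v : V, (G.degree v : ℝ) * g v = (δ : ℝ) ^ (1 + 2*α) / 2 := by
      intro v
      have h0 : (G.degree v : ℝ) ≠ 0 := (hdegpos v).ne'
      simp only [hg]
      field_simp
    rw [Finset.sum_congr rfl fun v _ => this v, Finset.sum_const, Finset.card_univ,
      nsmul_eq_mul]
    ring
  refine ⟨(Finset.sum_le_sum hle).trans hsum.le, ?_, ?_⟩
  · -- equality → regular
    intro hEq
    have htermeq : ∀ e ∈ G.edgeFinset,
        Sym2.lift ⟨fun u v => ((G.degree u : ℝ) * (G.degree v : ℝ)) ^ α,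
            fun u v => by simp [mul_comm]⟩ e
          = Sym2.lift ⟨fun u v => g u + g v, fun u v => by ring⟩ e :=
      (Finset.sum_eq_sum_iff_of_le hle).mp (hEq.trans hsum.symm)
    intro v
    have hpos : 0 < G.degree v := Nat.lt_of_lt_of_le hδ (hmindeg v)
    obtain ⟨u, hadj⟩ := G.degree_pos_iff_exists_adj v |>.mp hpos
    have he : s(v, u) ∈ G.edgeFinset := by
      rw [SimpleGraph.mem_edgeFinset, SimpleGraph.mem_edgeSet]; exact hadj
    have heq := htermeq _ he
    simp only [Sym2.lift_mk, hg] at heq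
    by_contra hne
    have hlt : (δ:ℝ) < (G.degree v : ℝ) := by
      have : δ < G.degree v := lt_of_le_of_ne (hmindeg v) (Ne.symm hne)
      exact_mod_cast this
    have hstrict := pt_lt (d := (δ:ℝ)) hα hδ0 (hdegge v) (hdegge u)
      (by nlinarith [hdegge u, hdegpos u])
    linarith [hstrict, heq.le, heq.ge]
  · -- regular → equality
    intro hreg
    have htermeq : ∀ e ∈ G.edgeFinset,
        Sym2.lift ⟨fun u v => ((G.degree u : ℝ) * (G.degree v : ℝ)) ^ α,
            fun u v => by simp [mul_comm]⟩ e
          = Sym2.lift ⟨fun u v => g u + g v, fun u v => by ring⟩ e := by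
      intro e he
      induction e with
      | h u v =>
        simp only [Sym2.lift_mk, hg, hreg u, hreg v]
        have := pt_eq (α := α) hδ0
        linarith [this]
    rw [Finset.sum_congr rfl htermeq, hsum]
end

section
/- Let Δ > δ ≥ 1 be integers and let α be a real number with α > -1/2. Then every finite simple graph G with minimum degree at least δ and maximum degree at most Δ satisfies R_α(G) ≤ (Δ^{1+2α}/2)·|G|, with equality if and only if G is Δ-regular, where R_α(G) = ∑_{uv ∈ E(G)} (d(u)·d(v))^α. -/
open Finset SimpleGraph

section Aux

variable {V : Type*} [Fintype V] [DecidableEq V] (G : SimpleGraph V) [DecidableRel G.Adj]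

private lemma randic_sum_dart_fst (f : V → ℝ) :
    ∑ d : G.Dart, f d.fst = ∑ v, (G.degree v : ℝ) * f v := by
  rw [← Finset.sum_fiberwise_of_maps_to (g := fun d : G.Dart => d.fst)
      (fun d _ => Finset.mem_univ _) (fun d => f d.fst)]
  refine Finset.sum_congr rfl fun v _ => ?_
  have h1 : ∀ d ∈ Finset.univ.filter (fun d : G.Dart => d.fst = v), f d.fst = f v := by
    intro d hd
    simp only [Finset.mem_filter] at hd
    rw [hd.2]
  rw [Finset.sum_congr rfl h1, Finset.sum_const, nsmul_eq_mul]
  congr 1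
  have := G.dart_fst_fiber_card_eq_degree v
  exact_mod_cast this

private lemma randic_sum_dart_fst_eq_edge_sum (f : V → ℝ) :
    ∑ d : G.Dart, f d.fst =
      ∑ e ∈ G.edgeFinset, Sym2.lift ⟨fun u v => f u + f v, fun u v => by ring⟩ e := by
  rw [← Finset.sum_fiberwise_of_maps_to (g := fun d : G.Dart => d.edge)
      (fun d _ => SimpleGraph.mem_edgeFinset.2 d.edge_mem) (fun d => f d.fst)]
  refine Finset.sum_congr rfl fun e he => ?_
  rw [SimpleGraph.mem_edgeFinset] at he
  induction e with
  | _ u v =>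
    have hadj : G.Adj u v := he
    set d : G.Dart := ⟨(u, v), hadj⟩ with hd
    have hfib : Finset.univ.filter (fun d' : G.Dart => d'.edge = s(u, v)) = {d, d.symm} := by
      have h2 := d.edge_fiber
      convert h2 using 2
      exact Iff.rfl
    rw [hfib, Finset.sum_pair d.symm_ne.symm]
    simp [hd, SimpleGraph.Dart.symm]

private lemma randic_edge_sum_eq (f : V → ℝ) :
    ∑ e ∈ G.edgeFinset, Sym2.lift ⟨fun u v => f u + f v, fun u v => by ring⟩ e
      = ∑ v, (G.degree v : ℝ) * f v := by
  rw [← randic_sum_dart_fst_eq_edge_sum, randic_sum_dart_fst]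

end Aux

/-- **Theorem (upper bound for `α > -1/2`).**
For `Δ > δ ≥ 1` and a real `α > -1/2`, every graph `G` with degrees in `[δ, Δ]`
satisfies `R_α(G) ≤ (Δ^{1+2α}/2)·|G|`, with equality iff `G` is `Δ`-regular. -/
theorem generalized_randic_upper_bound_of_gt_neg_half {V : Type*} [Fintype V] [DecidableEq V]
    (G : SimpleGraph V) [DecidableRel G.Adj]
    (δ Δ : ℕ) (hδ : 1 ≤ δ) (hδΔ : δ < Δ)
    (α : ℝ) (hα : -(1 / 2) < α)
    (hmindeg : ∀ v : V, δ ≤ G.degree v) (hmaxdeg : ∀ v : V, G.degree v ≤ Δ) :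
    (∑ e ∈ G.edgeFinset,
        Sym2.lift ⟨fun u v => ((G.degree u : ℝ) * (G.degree v : ℝ)) ^ α,
          fun u v => by simp [mul_comm]⟩ e ≤
      (Δ : ℝ) ^ (1 + 2 * α) / 2 * Fintype.card V) ∧
    ((∑ e ∈ G.edgeFinset,
        Sym2.lift ⟨fun u v => ((G.degree u : ℝ) * (G.degree v : ℝ)) ^ α,
          fun u v => by simp [mul_comm]⟩ e =
      (Δ : ℝ) ^ (1 + 2 * α) / 2 * Fintype.card V) ↔ G.IsRegularOfDegree Δ) := by
  have hΔ1 : 1 ≤ Δ := le_of_lt (lt_of_le_of_lt hδ hδΔ)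
  have hΔpos : (0 : ℝ) < Δ := by exact_mod_cast Nat.lt_of_lt_of_le Nat.zero_lt_one hΔ1
  have hdpos : ∀ v : V, (0 : ℝ) < G.degree v := by
    intro v
    have h1 : 1 ≤ G.degree v := le_trans hδ (hmindeg v)
    exact_mod_cast Nat.lt_of_lt_of_le Nat.zero_lt_one h1
  have hexp : (0 : ℝ) < 1 + 2 * α := by linarith
  set f : V → ℝ := fun v => (G.degree v : ℝ) ^ (2 * α) with hf
  set S : ℝ := ∑ e ∈ G.edgeFinset,
      Sym2.lift ⟨fun u v => ((G.degree u : ℝ) * (G.degree v : ℝ)) ^ α,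
        fun u v => by simp [mul_comm]⟩ e with hSdef
  -- AM-GM per edge
  have key : ∀ x y : ℝ, 0 < x → 0 < y → (x * y) ^ α ≤ (x ^ (2 * α) + y ^ (2 * α)) / 2 := by
    intro x y hx hy
    have h1 : (x * y) ^ α = x ^ α * y ^ α := Real.mul_rpow hx.le hy.le
    have h2 : x ^ (2 * α) = x ^ α * x ^ α := by rw [two_mul, Real.rpow_add hx]
    have h3 : y ^ (2 * α) = y ^ α * y ^ α := by rw [two_mul, Real.rpow_add hy]
    nlinarith [sq_nonneg (x ^ α - y ^ α)]
  have hstep1 : S ≤ (1 / 2) *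
      ∑ e ∈ G.edgeFinset, Sym2.lift ⟨fun u v => f u + f v, fun u v => by ring⟩ e := by
    rw [Finset.mul_sum]
    refine Finset.sum_le_sum fun e he => ?_
    induction e with
    | _ u v =>
      simp only [Sym2.lift_mk]
      have := key _ _ (hdpos u) (hdpos v)
      simp only [hf]
      linarith
  have hident : ∑ e ∈ G.edgeFinset, Sym2.lift ⟨fun u v => f u + f v, fun u v => by ring⟩ e
      = ∑ v, (G.degree v : ℝ) ^ (1 + 2 * α) := by
    rw [randic_edge_sum_eq]
    refine Finset.sum_congr rfl fun v _ => ?_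
    rw [hf, Real.rpow_add (hdpos v), Real.rpow_one]
  have htermle : ∀ v : V, (G.degree v : ℝ) ^ (1 + 2 * α) ≤ (Δ : ℝ) ^ (1 + 2 * α) := by
    intro v
    exact Real.rpow_le_rpow (hdpos v).le (by exact_mod_cast hmaxdeg v) hexp.le
  have hstep2 : ∑ v, (G.degree v : ℝ) ^ (1 + 2 * α) ≤ (Fintype.card V : ℝ) * (Δ : ℝ) ^ (1 + 2 * α) := by
    calc ∑ v, (G.degree v : ℝ) ^ (1 + 2 * α) ≤ ∑ _v : V, (Δ : ℝ) ^ (1 + 2 * α) :=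
          Finset.sum_le_sum fun v _ => htermle v
      _ = (Fintype.card V : ℝ) * (Δ : ℝ) ^ (1 + 2 * α) := by
          rw [Finset.sum_const, nsmul_eq_mul, Finset.card_univ]
  have hbound : S ≤ (Δ : ℝ) ^ (1 + 2 * α) / 2 * Fintype.card V := by
    calc S ≤ (1 / 2) * ∑ e ∈ G.edgeFinset,
          Sym2.lift ⟨fun u v => f u + f v, fun u v => by ring⟩ e := hstep1
      _ = (1 / 2) * ∑ v, (G.degree v : ℝ) ^ (1 + 2 * α) := by rw [hident]
      _ ≤ (1 / 2) * ((Fintype.card V : ℝ) * (Δ : ℝ) ^ (1 + 2 * α)) := by linarith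
      _ = (Δ : ℝ) ^ (1 + 2 * α) / 2 * Fintype.card V := by ring
  refine ⟨hbound, ?_, ?_⟩
  · -- equality → regular
    intro hEq
    have hA : (1 / 2) * ∑ v, (G.degree v : ℝ) ^ (1 + 2 * α)
        = (Δ : ℝ) ^ (1 + 2 * α) / 2 * Fintype.card V := by
      refine le_antisymm ?_ ?_
      · calc (1 / 2) * ∑ v, (G.degree v : ℝ) ^ (1 + 2 * α)
            ≤ (1 / 2) * ((Fintype.card V : ℝ) * (Δ : ℝ) ^ (1 + 2 * α)) := by linarith
          _ = (Δ : ℝ) ^ (1 + 2 * α) / 2 * Fintype.card V := by ring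
      · rw [← hEq, hSdef]
        calc S ≤ (1 / 2) * ∑ e ∈ G.edgeFinset,
              Sym2.lift ⟨fun u v => f u + f v, fun u v => by ring⟩ e := hstep1
          _ = (1 / 2) * ∑ v, (G.degree v : ℝ) ^ (1 + 2 * α) := by rw [hident]
    have hsums : ∑ v, (G.degree v : ℝ) ^ (1 + 2 * α) = ∑ _v : V, (Δ : ℝ) ^ (1 + 2 * α) := by
      rw [Finset.sum_const, nsmul_eq_mul, Finset.card_univ]
      nlinarith [hA]
    have hterms := (Finset.sum_eq_sum_iff_of_le (fun v _ => htermle v)).1 hsums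
    intro v
    have hv := hterms v (Finset.mem_univ v)
    by_contra hne
    have hlt : G.degree v < Δ := lt_of_le_of_ne (hmaxdeg v) hne
    have : (G.degree v : ℝ) ^ (1 + 2 * α) < (Δ : ℝ) ^ (1 + 2 * α) :=
      Real.rpow_lt_rpow (hdpos v).le (by exact_mod_cast hlt) hexp
    linarith
  · -- regular → equality
    intro hreg
    have hterm : ∀ e ∈ G.edgeFinset,
        Sym2.lift ⟨fun u v => ((G.degree u : ℝ) * (G.degree v : ℝ)) ^ α,
          fun u v => by simp [mul_comm]⟩ e = (Δ : ℝ) ^ (2 * α) := by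
      intro e _
      induction e with
      | _ u v =>
        simp only [Sym2.lift_mk, hreg u, hreg v]
        rw [Real.mul_rpow hΔpos.le hΔpos.le, ← Real.rpow_add hΔpos, two_mul]
    rw [hSdef, Finset.sum_congr rfl hterm, Finset.sum_const, nsmul_eq_mul]
    have hhand : (2 : ℝ) * #G.edgeFinset = (Fintype.card V : ℝ) * Δ := by
      have h1 := G.sum_degrees_eq_twice_card_edges
      have h2 : ∑ v, G.degree v = Fintype.card V * Δ := by
        rw [Finset.sum_congr rfl (fun v _ => hreg v), Finset.sum_const, smul_eq_mul,
          Finset.card_univ]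
      rw [h2] at h1
      exact_mod_cast h1.symm
    have hsplit : (Δ : ℝ) ^ (1 + 2 * α) = (Δ : ℝ) * (Δ : ℝ) ^ (2 * α) := by
      rw [Real.rpow_add hΔpos, Real.rpow_one]
    rw [hsplit]
    linear_combination ((Δ : ℝ) ^ (2 * α) / 2) * hhand
end
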